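/- arXiv:2604.02047 — 4 statements merged into one kernel-verified Lean document; each statement's English description precedes it below -/
import Mathlib

section
/- In the heterogeneous acceptance model with spine length m ≥ 1, branch widths w_0, …, w_{m−1}, spine acceptance rate p_s and branch acceptance rate p_t, the expected yield satisfies E[τ] = Σ_{i=1}^{m} p_s^i + Σ_{i=0}^{m−1} p_s^i (1−p_s) φ(p_t, w_i) (1 + ℓ̄(p_t, D)) + 1; in particular E[τ] is at least this right-hand side (Proposition 1, Spine Tree Expected Yield, tight case of independent branch chains). -/
open MeasureTheory ProbabilityTheory

/-- Initial all-success run length of the finite `Bool`-valued sequence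
`X 0, …, X (n-1)`: the largest `l ∈ {0,…,n}` with `X 0 = ⋯ = X (l-1) = true`. -/
def runLen (X : ℕ → Bool) (n : ℕ) : ℕ :=
  Nat.findGreatest (fun l => ∀ i < l, X i = true) n

/-- `φ(p, w) = 1 - (1-p)^w`. -/
noncomputable def phi (p : ℝ) (w : ℕ) : ℝ := 1 - (1 - p) ^ w

/-- Expected branch-chain extension length: `ℓ̄(p, D) = ∑_{k=1}^{D-1} p^k`. -/
noncomputable def lbar (p : ℝ) (D : ℕ) : ℝ := ∑ k ∈ Finset.Icc 1 (D - 1), p ^ k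

/-- Yield of one verification cycle of the spine tree: with spine run length
`L = runLen S m`, the yield is `L + 1` if `L = m`, and otherwise
`L + 1 + 1{∃ j < w L, B L j = 1} · (1 + runLen (C L) (D-1))`. -/
def tau (m D : ℕ) (w : ℕ → ℕ) (S : ℕ → Ω → Bool) (B C : ℕ → ℕ → Ω → Bool)
    (ω : Ω) : ℕ :=
  let L := runLen (fun i => S i ω) m
  if L = m then L + 1
  else L + 1 + (if ∃ j < w L, B L j ω = true then
      1 + runLen (fun k => C L k ω) (D - 1) else 0)

/-! Write `L` for the spine run length and `R l` for the run length of the chain `C l`. Pointwise,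
`τ = 1 + L + ∑_{l<m} 1{L = l} · 1{some B l j = 1} · (1 + R l)`, and each factor is a signed sum
of indicators of cylinder events `{S j = 1 for j < a, B l j = 0 for j < nb, C l k = 1 for k < nc}`:
`L = ∑_{a=1}^m 1{L ≥ a}`, `1{L = l} = 1{L ≥ l} - 1{L ≥ l+1}`,
`1{∃ j, B l j = 1} = 1 - 1{∀ j, B l j = 0}` and `1 + R l = ∑_{k=0}^{D-1} 1{R l ≥ k}`.
By independence such a cylinder has probability `p_s^a (1-p_t)^nb p_t^nc`, and linearity of the
integral gives the formula. -/

open Finset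

section RunLength

variable (X : ℕ → Bool)

lemma runLen_le (n : ℕ) : runLen X n ≤ n := Nat.findGreatest_le n

variable {n : ℕ}

lemma le_runLen_iff {a : ℕ} (ha : a ≤ n) : a ≤ runLen X n ↔ ∀ j < a, X j = true :=
  ⟨fun h j hj => Nat.findGreatest_spec (P := fun l => ∀ i < l, X i = true) (Nat.zero_le n)
      (fun _ h => absurd h (Nat.not_lt_zero _)) j (hj.trans_le h),
    fun h => Nat.le_findGreatest (P := fun l => ∀ i < l, X i = true) ha h⟩

lemma sum_ite_forall_lt_eq_card {s : Finset ℕ} (hs : ∀ a ∈ s, a ≤ n) :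
    (∑ a ∈ s, if ∀ j < a, X j = true then (1 : ℝ) else 0) = #{a ∈ s | a ≤ runLen X n} := by
  rw [sum_boole, filter_congr fun a ha => (le_runLen_iff X (hs a ha)).symm]

lemma runLen_eq_sum_Icc :
    (runLen X n : ℝ) = ∑ a ∈ Icc 1 n, if ∀ j < a, X j = true then (1 : ℝ) else 0 := by
  rw [sum_ite_forall_lt_eq_card X fun a ha => (mem_Icc.1 ha).2]
  have : {a ∈ Icc 1 n | a ≤ runLen X n} = Icc 1 (runLen X n) := by
    ext a; simp only [mem_filter, mem_Icc]; have := runLen_le X n; omega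
  simp [this]

lemma runLen_add_one_eq_sum_range :
    (runLen X n : ℝ) + 1 = ∑ k ∈ range (n + 1), if ∀ j < k, X j = true then (1 : ℝ) else 0 := by
  rw [sum_ite_forall_lt_eq_card X fun a ha => Nat.lt_succ_iff.1 (mem_range.1 ha)]
  have : {a ∈ range (n + 1) | a ≤ runLen X n} = range (runLen X n + 1) := by
    ext a; simp only [mem_filter, mem_range]; have := runLen_le X n; omega
  simp [this]

lemma ite_runLen_eq_sub {l : ℕ} (hl : l < n) :
    (if runLen X n = l then (1 : ℝ) else 0) =
      (if ∀ j < l, X j = true then 1 else 0) - if ∀ j < l + 1, X j = true then 1 else 0 := by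
  simp only [← le_runLen_iff X hl.le, ← le_runLen_iff X hl]
  split_ifs <;> first | omega | norm_num

end RunLength

lemma one_add_lbar (p : ℝ) (D : ℕ) : 1 + lbar p D = ∑ k ∈ range (D - 1 + 1), p ^ k := by
  rw [lbar, sum_range_succ', ← Ico_add_one_right_eq_Icc, sum_Ico_eq_sum_range,
    add_tsub_cancel_right, pow_zero, add_comm]
  simp_rw [add_comm 1]

lemma ProbabilityTheory.iIndepFun.measureReal_forall_comp_eq {Ω ι κ β : Type*}
    [MeasurableSpace Ω] {μ : Measure Ω} [MeasurableSpace β] [MeasurableSingletonClass β]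
    [Fintype κ] {X : ι → Ω → β} (hX : iIndepFun X μ) {g : κ → ι} (hg : g.Injective)
    (b : κ → β) :
    μ.real {ω | ∀ x, X (g x) ω = b x} = ∏ x, μ.real {ω | X (g x) ω = b x} := by
  have hset : {ω | ∀ x, X (g x) ω = b x} = ⋂ x, X (g x) ⁻¹' {b x} := by ext; simp
  rw [hset, measureReal_def,
    (hX.precomp hg).meas_iInter fun x => ⟨{b x}, measurableSet_singleton _, rfl⟩,
    ENNReal.toReal_prod]
  rfl

lemma measureReal_bool_eq_false {Ω : Type*} [MeasurableSpace Ω] {μ : Measure Ω}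
    [IsProbabilityMeasure μ] {X : Ω → Bool} (hX : Measurable X) :
    μ.real {ω | X ω = false} = 1 - μ.real {ω | X ω = true} := by
  have hset : {ω | X ω = false} = {ω | X ω = true}ᶜ := by ext; simp
  rw [hset]
  exact probReal_compl_eq_one_sub (hX (measurableSet_singleton true))

section SpineTree

variable {Ω : Type*} {m D : ℕ} {w : ℕ → ℕ} {S : ℕ → Ω → Bool} {B C : ℕ → ℕ → Ω → Bool}

def prefixEq (X : ℕ → Ω → Bool) (b : Bool) (n : ℕ) : Set Ω := {ω | ∀ j < n, X j ω = b}

def prefixCylinder (S : ℕ → Ω → Bool) (B C : ℕ → ℕ → Ω → Bool) (l a nb nc : ℕ) : Set Ω :=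
  prefixEq S true a ∩ prefixEq (B l) false nb ∩ prefixEq (C l) true nc

/-- `c l a nb nc` is a weight of `prefixCylinder S B C l a nb nc`: with indicator weights this is
the yield, with probability weights its mean. -/
def cylinderExpansion (m D : ℕ) (w : ℕ → ℕ) (c : ℕ → ℕ → ℕ → ℕ → ℝ) : ℝ :=
  1 + ∑ a ∈ Icc 1 m, c 0 a 0 0 + ∑ l ∈ range m, ∑ k ∈ range (D - 1 + 1),
    (c l l 0 k - c l (l + 1) 0 k - (c l l (w l) k - c l (l + 1) (w l) k))

lemma indicator_prefixEq_apply (X : ℕ → Ω → Bool) (b : Bool) (n : ℕ) (ω : Ω) :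
    (prefixEq X b n).indicator (1 : Ω → ℝ) ω = if ∀ j < n, X j ω = b then 1 else 0 := by
  simp [Set.indicator_apply, prefixEq]

lemma indicator_prefixCylinder_apply (l a nb nc : ℕ) (ω : Ω) :
    (prefixCylinder S B C l a nb nc).indicator (1 : Ω → ℝ) ω =
      (if ∀ j < a, S j ω = true then 1 else 0) *
        (if ∀ j < nb, B l j ω = false then 1 else 0) *
        if ∀ k < nc, C l k ω = true then 1 else 0 := by
  rw [prefixCylinder, Set.inter_indicator_one, Set.inter_indicator_one]
  simp only [Pi.mul_apply, indicator_prefixEq_apply]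

lemma tau_eq (ω : Ω) :
    (tau m D w S B C ω : ℝ) = runLen (S · ω) m + 1 + ∑ l ∈ range m,
      (if runLen (S · ω) m = l then (1 : ℝ) else 0) *
        (if ∃ j < w l, B l j ω = true then 1 else 0) * (runLen (C l · ω) (D - 1) + 1) := by
  rcases (runLen_le (S · ω) m).eq_or_lt with hLm | hLm
  · rw [tau, if_pos hLm,
      sum_eq_zero fun l hl => by rw [if_neg (by rw [mem_range] at hl; omega)]; ring]
    push_cast; ring
  · rw [tau, if_neg hLm.ne, sum_eq_single_of_mem (runLen (S · ω) m) (mem_range.2 hLm)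
      fun l _ hl => by rw [if_neg (Ne.symm hl)]; ring, if_pos rfl]
    split_ifs <;> push_cast <;> ring

lemma tau_eq_cylinderExpansion (ω : Ω) : (tau m D w S B C ω : ℝ) =
    cylinderExpansion m D w fun l a nb nc => (prefixCylinder S B C l a nb nc).indicator 1 ω := by
  have hspine : ∀ a ∈ Icc 1 m, (prefixCylinder S B C 0 a 0 0).indicator (1 : Ω → ℝ) ω =
      if ∀ j < a, S j ω = true then 1 else 0 := fun a _ => by
    simp [indicator_prefixCylinder_apply]
  have hbranch : ∀ l, (if ∃ j < w l, B l j ω = true then (1 : ℝ) else 0) =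
      1 - if ∀ j < w l, B l j ω = false then 1 else 0 := fun l => by
    by_cases h : ∀ j < w l, B l j ω = false
    · rw [if_pos h, if_neg (by simpa using h)]; ring
    · rw [if_neg h, if_pos (by simpa using h)]; ring
  have hstop : ∀ l ∈ range m, (if runLen (S · ω) m = l then (1 : ℝ) else 0) *
      (if ∃ j < w l, B l j ω = true then 1 else 0) * (runLen (C l · ω) (D - 1) + 1) =
      ∑ k ∈ range (D - 1 + 1),
        ((prefixCylinder S B C l l 0 k).indicator 1 ω -
          (prefixCylinder S B C l (l + 1) 0 k).indicator 1 ω -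
          ((prefixCylinder S B C l l (w l) k).indicator 1 ω -
            (prefixCylinder S B C l (l + 1) (w l) k).indicator 1 ω)) := fun l hl => by
    rw [ite_runLen_eq_sub _ (mem_range.1 hl), hbranch, runLen_add_one_eq_sum_range, mul_sum]
    refine sum_congr rfl fun k _ => ?_
    simp only [indicator_prefixCylinder_apply, Nat.not_lt_zero, IsEmpty.forall_iff,
      implies_true, if_true]
    ring
  rw [tau_eq, runLen_eq_sum_Icc, cylinderExpansion, sum_congr rfl hspine, sum_congr rfl hstop]
  ring

variable [MeasurableSpace Ω] {μ : Measure Ω}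

lemma measurableSet_prefixEq {X : ℕ → Ω → Bool} (hX : ∀ j, Measurable (X j)) (b : Bool)
    (n : ℕ) : MeasurableSet (prefixEq X b n) := by
  simp only [prefixEq, Set.ofPred_forall]
  exact .iInter fun j => .iInter fun _ => hX j (measurableSet_singleton b)

lemma integral_tau_eq_cylinderExpansion [IsProbabilityMeasure μ]
    (hSmeas : ∀ i, Measurable (S i)) (hBmeas : ∀ i j, Measurable (B i j))
    (hCmeas : ∀ i k, Measurable (C i k)) :
    ∫ ω, (tau m D w S B C ω : ℝ) ∂μ =
      cylinderExpansion m D w fun l a nb nc => μ.real (prefixCylinder S B C l a nb nc) := by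
  have hmeas (l a nb nc : ℕ) : MeasurableSet (prefixCylinder S B C l a nb nc) :=
    ((measurableSet_prefixEq hSmeas _ _).inter (measurableSet_prefixEq (hBmeas l) _ _)).inter
      (measurableSet_prefixEq (hCmeas l) _ _)
  have hintegrable (l a nb nc : ℕ) :
      Integrable ((prefixCylinder S B C l a nb nc).indicator (1 : Ω → ℝ)) μ :=
    (integrable_const 1).indicator (hmeas l a nb nc)
  simp_rw [tau_eq_cylinderExpansion, cylinderExpansion]
  simp (disch := fun_prop) only [integral_add, integral_sub, integral_finsetSum, integral_const,
    integral_indicator_one (hmeas _ _ _ _), probReal_univ, smul_eq_mul, mul_one]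

lemma measureReal_prefixCylinder [IsProbabilityMeasure μ] {ps pt : ℝ} (hps : 0 ≤ ps)
    (hpt : 0 ≤ pt) (hBmeas : ∀ i j, Measurable (B i j))
    (hS : ∀ i < m, μ {ω | S i ω = true} = ENNReal.ofReal ps)
    (hB : ∀ i < m, ∀ j < w i, μ {ω | B i j ω = true} = ENNReal.ofReal pt)
    (hC : ∀ i < m, ∀ k < D - 1, μ {ω | C i k ω = true} = ENNReal.ofReal pt)
    (hindep : iIndepFun
      (Sum.elim (fun i : {i : ℕ // i < m} => S i.1)
        (Sum.elim
          (fun p : {p : ℕ × ℕ // p.1 < m ∧ p.2 < w p.1} => B p.1.1 p.1.2)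
          (fun p : {p : ℕ × ℕ // p.1 < m ∧ p.2 < D - 1} => C p.1.1 p.1.2))) μ)
    {l a nb nc : ℕ} (ha : a ≤ m) (hb : ∀ j < nb, l < m ∧ j < w l)
    (hc : ∀ k < nc, l < m ∧ k < D - 1) :
    μ.real (prefixCylinder S B C l a nb nc) = ps ^ a * (1 - pt) ^ nb * pt ^ nc := by
  let g : Fin a ⊕ (Fin nb ⊕ Fin nc) → {i : ℕ // i < m} ⊕
      ({p : ℕ × ℕ // p.1 < m ∧ p.2 < w p.1} ⊕ {p : ℕ × ℕ // p.1 < m ∧ p.2 < D - 1}) :=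
    Sum.map (fun j => ⟨j, j.2.trans_le ha⟩)
      (Sum.map (fun j => ⟨(l, j), hb j j.2⟩) (fun k => ⟨(l, k), hc k k.2⟩))
  have hg : g.Injective := Sum.map_injective.2
    ⟨fun i j h => Fin.ext (congrArg Subtype.val h), Sum.map_injective.2
      ⟨fun i j h => Fin.ext (congrArg (·.1.2) h), fun i j h => Fin.ext (congrArg (·.1.2) h)⟩⟩
  let b : Fin a ⊕ (Fin nb ⊕ Fin nc) → Bool :=
    Sum.elim (fun _ => true) (Sum.elim (fun _ => false) fun _ => true)
  convert hindep.measureReal_forall_comp_eq hg b using 2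
  · ext ω
    simp [prefixCylinder, prefixEq, g, b, Fin.forall_iff, and_assoc]
  have hS' (j : Fin a) : μ.real {ω | S j ω = true} = ps := by
    rw [measureReal_def, hS j (j.2.trans_le ha), ENNReal.toReal_ofReal hps]
  have hB' (j : Fin nb) : μ.real {ω | B l j ω = false} = 1 - pt := by
    obtain ⟨hl, hj⟩ := hb j j.2
    rw [measureReal_bool_eq_false (hBmeas l j), measureReal_def, hB l hl j hj,
      ENNReal.toReal_ofReal hpt]
  have hC' (k : Fin nc) : μ.real {ω | C l k ω = true} = pt := by
    obtain ⟨hl, hk⟩ := hc k k.2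
    rw [measureReal_def, hC l hl k hk, ENNReal.toReal_ofReal hpt]
  simp only [Fintype.prod_sum_type, g, b, Sum.map_inl, Sum.map_inr, Sum.elim_inl, Sum.elim_inr,
    hS', hB', hC', prod_const, card_univ, Fintype.card_fin]
  ring

end SpineTree

theorem spine_tree_expected_yield_general {Ω : Type*} [MeasurableSpace Ω] (μ : Measure Ω)
    [IsProbabilityMeasure μ] (m D : ℕ)
    (ps pt : ℝ) (hps : ps ∈ Set.Icc (0 : ℝ) 1) (hpt : pt ∈ Set.Icc (0 : ℝ) 1)
    (w : ℕ → ℕ) (S : ℕ → Ω → Bool) (B C : ℕ → ℕ → Ω → Bool)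
    (hSmeas : ∀ i, Measurable (S i))
    (hBmeas : ∀ i j, Measurable (B i j))
    (hCmeas : ∀ i k, Measurable (C i k))
    (hS : ∀ i < m, μ {ω | S i ω = true} = ENNReal.ofReal ps)
    (hB : ∀ i < m, ∀ j < w i, μ {ω | B i j ω = true} = ENNReal.ofReal pt)
    (hC : ∀ i < m, ∀ k < D - 1, μ {ω | C i k ω = true} = ENNReal.ofReal pt)
    (hindep : iIndepFun
      (Sum.elim (fun i : {i : ℕ // i < m} => S i.1)
        (Sum.elim
          (fun p : {p : ℕ × ℕ // p.1 < m ∧ p.2 < w p.1} => B p.1.1 p.1.2)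
          (fun p : {p : ℕ × ℕ // p.1 < m ∧ p.2 < D - 1} => C p.1.1 p.1.2))) μ) :
    (∫ ω, (tau m D w S B C ω : ℝ) ∂μ)
        = (∑ i ∈ Finset.Icc 1 m, ps ^ i)
          + (∑ i ∈ Finset.range m,
              ps ^ i * (1 - ps) * phi pt (w i) * (1 + lbar pt D)) + 1 ∧
    (∑ i ∈ Finset.Icc 1 m, ps ^ i)
        + (∑ i ∈ Finset.range m,
            ps ^ i * (1 - ps) * phi pt (w i) * (1 + lbar pt D)) + 1
      ≤ ∫ ω, (tau m D w S B C ω : ℝ) ∂μ := by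
  have hcyl {l a nb nc : ℕ} := measureReal_prefixCylinder (l := l) (a := a) (nb := nb) (nc := nc)
    hps.1 hpt.1 hBmeas hS hB hC hindep
  have hspine : ∀ a ∈ Icc 1 m, μ.real (prefixCylinder S B C 0 a 0 0) = ps ^ a := fun a ha => by
    rw [hcyl (mem_Icc.1 ha).2 (by simp) (by simp)]; ring
  have hbranch : ∀ l ∈ range m, ∑ k ∈ range (D - 1 + 1),
      (μ.real (prefixCylinder S B C l l 0 k) - μ.real (prefixCylinder S B C l (l + 1) 0 k) -
        (μ.real (prefixCylinder S B C l l (w l) k) -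
          μ.real (prefixCylinder S B C l (l + 1) (w l) k))) =
      ps ^ l * (1 - ps) * phi pt (w l) * (1 + lbar pt D) := fun l hl => by
    rw [mem_range] at hl
    rw [one_add_lbar, mul_sum]
    refine sum_congr rfl fun k hk => ?_
    have hk' : ∀ j < k, l < m ∧ j < D - 1 := fun j hj => ⟨hl, by rw [mem_range] at hk; omega⟩
    have hw : ∀ j < w l, l < m ∧ j < w l := fun j hj => ⟨hl, hj⟩
    rw [hcyl hl.le (by simp) hk', hcyl (a := l + 1) hl (by simp) hk', hcyl hl.le hw hk',
      hcyl (a := l + 1) hl hw hk', phi]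
    ring
  have hmean : ∫ ω, (tau m D w S B C ω : ℝ) ∂μ = (∑ i ∈ Icc 1 m, ps ^ i) +
      (∑ i ∈ range m, ps ^ i * (1 - ps) * phi pt (w i) * (1 + lbar pt D)) + 1 := by
    rw [integral_tau_eq_cylinderExpansion hSmeas hBmeas hCmeas, cylinderExpansion,
      sum_congr rfl hspine, sum_congr rfl hbranch]
    ring
  exact ⟨hmean, hmean.ge⟩

/-- Proposition 1 (Spine Tree Expected Yield, tight case of independent branch
chains): in the heterogeneous acceptance model with spine length `m ≥ 1`, branch
widths `w_0, …, w_{m-1}`, spine rate `p_s` and branch rate `p_t`, the expected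
yield equals `∑_{i=1}^{m} p_s^i + ∑_{i=0}^{m-1} p_s^i (1-p_s) φ(p_t,w_i)(1+ℓ̄(p_t,D)) + 1`;
in particular it is at least this right-hand side. -/
theorem spine_tree_expected_yield {Ω : Type*} [MeasurableSpace Ω] (μ : Measure Ω)
    [IsProbabilityMeasure μ] (m D : ℕ) (hm : 1 ≤ m) (hD : 1 ≤ D)
    (ps pt : ℝ) (hps : ps ∈ Set.Icc (0 : ℝ) 1) (hpt : pt ∈ Set.Icc (0 : ℝ) 1)
    (w : ℕ → ℕ) (S : ℕ → Ω → Bool) (B C : ℕ → ℕ → Ω → Bool)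
    (hSmeas : ∀ i, Measurable (S i))
    (hBmeas : ∀ i j, Measurable (B i j))
    (hCmeas : ∀ i k, Measurable (C i k))
    (hS : ∀ i < m, μ {ω | S i ω = true} = ENNReal.ofReal ps)
    (hB : ∀ i < m, ∀ j < w i, μ {ω | B i j ω = true} = ENNReal.ofReal pt)
    (hC : ∀ i < m, ∀ k < D - 1, μ {ω | C i k ω = true} = ENNReal.ofReal pt)
    (hindep : iIndepFun
      (Sum.elim (fun i : {i : ℕ // i < m} => S i.1)
        (Sum.elim
          (fun p : {p : ℕ × ℕ // p.1 < m ∧ p.2 < w p.1} => B p.1.1 p.1.2)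
          (fun p : {p : ℕ × ℕ // p.1 < m ∧ p.2 < D - 1} => C p.1.1 p.1.2))) μ) :
    (∫ ω, (tau m D w S B C ω : ℝ) ∂μ)
        = (∑ i ∈ Finset.Icc 1 m, ps ^ i)
          + (∑ i ∈ Finset.range m,
              ps ^ i * (1 - ps) * phi pt (w i) * (1 + lbar pt D)) + 1 ∧
    (∑ i ∈ Finset.Icc 1 m, ps ^ i)
        + (∑ i ∈ Finset.range m,
            ps ^ i * (1 - ps) * phi pt (w i) * (1 + lbar pt D)) + 1
      ≤ ∫ ω, (tau m D w S B C ω : ℝ) ∂μ :=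
  spine_tree_expected_yield_general μ m D ps pt hps hpt w S B C hSmeas hBmeas hCmeas hS hB hC hindep
end

section
/- Let 0 < p_s < 1, 0 < p_t < 1, let m ≥ 1 be an integer and B_t ∈ ℝ. Define S(w) = Σ_{i=0}^{m−1} p_s^i (1 − (1−p_t)^{w_i}) for w ∈ ℝ^m, where (1−p_t)^{w_i} = exp(w_i · ln(1−p_t)). Let λ = ln p_s / ln(1−p_t) (which is positive) and define w*_i = B_t/m + λ((m−1)/2 − i) for i = 0, …, m−1. Then Σ_{i=0}^{m−1} w*_i = B_t, the allocation satisfies w*_i = w*_0 − λ·i (decreasing linearly with depth with slope |ln p_s|/|ln(1−p_t)|), and for every w ∈ ℝ^m with Σ_{i=0}^{m−1} w_i = B_t one has S(w) ≤ S(w*), with equality only when w = w* (Proposition 2, Optimal Branch Allocation, continuous relaxation). -/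
/-- Synergy objective of the spine tree (continuous relaxation, real exponents
interpreted via `a^w = exp (w * log a)`):
`S(w) = ∑_{i=0}^{m-1} p_s^i (1 - (1-p_t)^{w_i})`. -/
noncomputable def synergyObj (ps pt : ℝ) (m : ℕ) (w : Fin m → ℝ) : ℝ :=
  ∑ i : Fin m, ps ^ (i : ℕ) * (1 - Real.exp (w i * Real.log (1 - pt)))

private lemma sum_fin_cast (m : ℕ) : ∑ i : Fin m, ((i : ℕ) : ℝ) = m * ((m : ℝ) - 1) / 2 := by
  rw [Fin.sum_univ_eq_sum_range]
  induction m with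
  | zero => simp
  | succ n ih =>
    rw [Finset.sum_range_succ, ih]
    push_cast
    ring

/-- Proposition 2 (Optimal Branch Allocation, continuous relaxation): the allocation
`w*_i = B_t/m + λ((m-1)/2 - i)` with `λ = ln p_s / ln(1-p_t) > 0` satisfies the budget
constraint, decreases linearly with depth with slope `λ`, and uniquely maximizes the
synergy objective among budget-feasible allocations. -/
theorem optimal_branch_allocation (ps pt : ℝ) (hps : ps ∈ Set.Ioo (0 : ℝ) 1)
    (hpt : pt ∈ Set.Ioo (0 : ℝ) 1) (m : ℕ) (hm : 1 ≤ m) (Bt : ℝ) :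
    0 < Real.log ps / Real.log (1 - pt) ∧
    (∑ i : Fin m, (Bt / m + (Real.log ps / Real.log (1 - pt)) * (((m : ℝ) - 1) / 2 - (i : ℕ)))
      = Bt) ∧
    (∀ i : Fin m,
      (Bt / m + (Real.log ps / Real.log (1 - pt)) * (((m : ℝ) - 1) / 2 - (i : ℕ)))
        = (Bt / m + (Real.log ps / Real.log (1 - pt)) * (((m : ℝ) - 1) / 2 - (0 : ℕ)))
          - (Real.log ps / Real.log (1 - pt)) * (i : ℕ)) ∧
    (∀ w : Fin m → ℝ, (∑ i, w i) = Bt →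
      synergyObj ps pt m w ≤ synergyObj ps pt m
        (fun i => Bt / m + (Real.log ps / Real.log (1 - pt)) * (((m : ℝ) - 1) / 2 - (i : ℕ))) ∧
      (synergyObj ps pt m w = synergyObj ps pt m
        (fun i => Bt / m + (Real.log ps / Real.log (1 - pt)) * (((m : ℝ) - 1) / 2 - (i : ℕ))) →
        w = fun i : Fin m => Bt / m + (Real.log ps / Real.log (1 - pt)) * (((m : ℝ) - 1) / 2 - (i : ℕ)))) := by
  obtain ⟨hps0, hps1⟩ := hps
  obtain ⟨hpt0, hpt1⟩ := hpt
  set P : ℝ := Real.log ps with hP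
  set L : ℝ := Real.log (1 - pt) with hL
  have hPneg : P < 0 := Real.log_neg hps0 hps1
  have hLneg : L < 0 := Real.log_neg (by linarith) (by linarith)
  have hLne : L ≠ 0 := ne_of_lt hLneg
  have hmR : (0 : ℝ) < m := by exact_mod_cast Nat.lt_of_lt_of_le Nat.zero_lt_one hm
  have hmne : (m : ℝ) ≠ 0 := ne_of_gt hmR
  have hlam : 0 < P / L := div_pos_of_neg_of_neg hPneg hLneg
  -- budget constraint
  have hbudget : (∑ i : Fin m, (Bt / m + (P / L) * (((m : ℝ) - 1) / 2 - (i : ℕ)))) = Bt := by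
    rw [Finset.sum_add_distrib]
    simp only [Finset.sum_const, Finset.card_univ, Fintype.card_fin, nsmul_eq_mul]
    have h1 : (m : ℝ) * (Bt / m) = Bt := by field_simp
    have h2 : ∑ i : Fin m, (P / L) * (((m : ℝ) - 1) / 2 - (i : ℕ)) = 0 := by
      rw [← Finset.mul_sum]
      have : ∑ i : Fin m, (((m : ℝ) - 1) / 2 - (i : ℕ)) = 0 := by
        rw [Finset.sum_sub_distrib, sum_fin_cast]
        simp only [Finset.sum_const, Finset.card_univ, Fintype.card_fin, nsmul_eq_mul]
        ring
      rw [this, mul_zero]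
    rw [h1, h2, add_zero]
  refine ⟨hlam, hbudget, fun i => by push_cast; ring, ?_⟩
  -- main optimality statement
  intro w hw
  -- key rewriting: each term of the objective
  have hterm : ∀ (v : Fin m → ℝ) (i : Fin m),
      ps ^ (i : ℕ) * (1 - Real.exp (v i * L)) = ps ^ (i : ℕ) - Real.exp ((i : ℕ) * P + v i * L) := by
    intro v i
    have hpow : ps ^ (i : ℕ) = Real.exp ((i : ℕ) * P) := by
      rw [Real.exp_nat_mul, Real.exp_log hps0]
    rw [Real.exp_add, ← hpow]
    ring
  have hSyn : ∀ v : Fin m → ℝ, synergyObj ps pt m v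
      = (∑ i : Fin m, ps ^ (i : ℕ)) - ∑ i : Fin m, Real.exp ((i : ℕ) * P + v i * L) := by
    intro v
    rw [synergyObj, ← Finset.sum_sub_distrib]
    exact Finset.sum_congr rfl fun i _ => hterm v i
  set C : ℝ := (Bt / m) * L + P * ((m : ℝ) - 1) / 2 with hC
  set wstar : Fin m → ℝ := fun i => Bt / m + (P / L) * (((m : ℝ) - 1) / 2 - (i : ℕ)) with hwstar
  have hstar : ∀ i : Fin m, (i : ℕ) * P + wstar i * L = C := by
    intro i
    have : (P / L) * L = P := div_mul_cancel₀ P hLne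
    simp only [hwstar, hC]
    field_simp
    ring
  -- exponent sum of w equals m * C
  have hEsum : ∑ i : Fin m, ((i : ℕ) * P + w i * L) = m * C := by
    rw [Finset.sum_add_distrib]
    have h1 : ∑ i : Fin m, ((i : ℕ) : ℝ) * P = m * ((m : ℝ) - 1) / 2 * P := by
      rw [← Finset.sum_mul, sum_fin_cast]
    have h2 : ∑ i : Fin m, w i * L = Bt * L := by rw [← Finset.sum_mul, hw]
    rw [h1, h2, hC]
    field_simp
    ring
  -- pointwise bound: exp C * (1 + (E i - C)) ≤ exp (E i)
  have hpt_le : ∀ i : Fin m,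
      Real.exp C * (1 + ((i : ℕ) * P + w i * L - C)) ≤ Real.exp ((i : ℕ) * P + w i * L) := by
    intro i
    have h := Real.add_one_le_exp ((i : ℕ) * P + w i * L - C)
    calc Real.exp C * (1 + ((i : ℕ) * P + w i * L - C))
        ≤ Real.exp C * Real.exp ((i : ℕ) * P + w i * L - C) := by
          apply mul_le_mul_of_nonneg_left _ (Real.exp_pos C).le
          linarith
      _ = Real.exp ((i : ℕ) * P + w i * L) := by rw [← Real.exp_add]; ring_nf
  have hsum_lhs : ∑ i : Fin m, Real.exp C * (1 + ((i : ℕ) * P + w i * L - C))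
      = m * Real.exp C := by
    rw [← Finset.mul_sum]
    have : ∑ i : Fin m, (1 + ((i : ℕ) * P + w i * L - C)) = m := by
      rw [Finset.sum_add_distrib, Finset.sum_sub_distrib, hEsum]
      simp only [Finset.sum_const, Finset.card_univ, Fintype.card_fin, nsmul_eq_mul]
      ring
    rw [this]; ring
  have hstar_sum : ∑ i : Fin m, Real.exp ((i : ℕ) * P + wstar i * L) = m * Real.exp C := by
    have : ∀ i : Fin m, Real.exp ((i : ℕ) * P + wstar i * L) = Real.exp C := fun i => by
      rw [hstar i]
    rw [Finset.sum_congr rfl fun i _ => this i]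
    simp [mul_comm]
  have hge : m * Real.exp C ≤ ∑ i : Fin m, Real.exp ((i : ℕ) * P + w i * L) := by
    rw [← hsum_lhs]
    exact Finset.sum_le_sum fun i _ => hpt_le i
  constructor
  · rw [hSyn w, hSyn wstar, hstar_sum]
    linarith
  · -- equality implies w = wstar
    intro heq
    by_contra hne
    have hj : ∃ j : Fin m, w j ≠ wstar j := by
      by_contra h
      push_neg at h
      exact hne (funext h)
    obtain ⟨j, hj⟩ := hj
    have hEj : (j : ℕ) * P + w j * L ≠ C := by
      intro h
      apply hj
      have h2 := hstar j
      have : w j * L = wstar j * L := by linarith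
      exact mul_right_cancel₀ hLne this
    have hstrict : Real.exp C * (1 + ((j : ℕ) * P + w j * L - C))
        < Real.exp ((j : ℕ) * P + w j * L) := by
      have h := Real.add_one_lt_exp (x := (j : ℕ) * P + w j * L - C) (by
        intro h; apply hEj; linarith)
      calc Real.exp C * (1 + ((j : ℕ) * P + w j * L - C))
          < Real.exp C * Real.exp ((j : ℕ) * P + w j * L - C) := by
            apply mul_lt_mul_of_pos_left _ (Real.exp_pos C)
            linarith
        _ = Real.exp ((j : ℕ) * P + w j * L) := by rw [← Real.exp_add]; ring_nf
    have hgt : m * Real.exp C < ∑ i : Fin m, Real.exp ((i : ℕ) * P + w i * L) := by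
      rw [← hsum_lhs]
      exact Finset.sum_lt_sum (fun i _ => hpt_le i) ⟨j, Finset.mem_univ j, hstrict⟩
    have : synergyObj ps pt m w < synergyObj ps pt m wstar := by
      rw [hSyn w, hSyn wstar, hstar_sum]
      linarith
    rw [heq] at this
    exact lt_irrefl _ this
end

section
/- Let 0 < p_s < 1, 0 < p_t < 1, m ≥ 1 an integer and B_t ∈ ℝ, and define S(w) = Σ_{i=0}^{m−1} p_s^i (1 − (1−p_t)^{w_i}) for w ∈ ℝ^m with real exponents. If w* ∈ ℝ^m maximizes S over {w ∈ ℝ^m : Σ_{i=0}^{m−1} w_i = B_t}, then there exists μ > 0 such that p_s^i (1−p_t)^{w*_i} = μ for all i ∈ {0,…,m−1} (the equal-marginal Lagrange stationarity condition in the proof of Proposition 2). -/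
open Real

theorem eq_of_isMaxOn_sum_of_hasDerivAt {ι : Type*} [Fintype ι] [DecidableEq ι]
    {f : ι → ℝ → ℝ} {f' : ι → ℝ} {x : ι → ℝ} (hf : ∀ i, HasDerivAt (f i) (f' i) (x i))
    (hmax : IsMaxOn (fun y : ι → ℝ => ∑ i, f i (y i)) {y | ∑ i, y i = ∑ i, x i} x) (i j : ι) :
    f' i = f' j := by
  set c : ι → ℝ := Pi.single i 1 - Pi.single j 1
  have hc_sum : ∑ k, c k = 0 := by simp [c, Finset.sum_sub_distrib]
  set g : ℝ → ℝ := fun t => ∑ k, f k (x k + t * c k)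
  have hg_max : IsLocalMax g 0 := Filter.Eventually.of_forall fun t => by
    simpa [g] using
      isMaxOn_iff.mp hmax _ (by simp [Finset.sum_add_distrib, ← Finset.mul_sum, hc_sum])
  have hg_deriv : HasDerivAt g (∑ k, f' k * c k) 0 := by
    refine HasDerivAt.fun_sum fun k _ => ?_
    have hline : HasDerivAt (fun t : ℝ => x k + t * c k) (c k) 0 := by
      simpa using ((hasDerivAt_id (0 : ℝ)).mul_const (c k)).const_add (x k)
    exact (hf k).comp_of_eq 0 hline (by simp)
  have hzero : ∑ k, f' k * c k = 0 := hg_deriv.deriv ▸ hg_max.deriv_eq_zero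
  simpa [c, mul_sub, Finset.sum_sub_distrib, Pi.single_apply, sub_eq_zero] using hzero

theorem hasDerivAt_mul_one_sub_exp_mul (a L w : ℝ) :
    HasDerivAt (fun v => a * (1 - exp (v * L))) (-L * (a * exp (w * L))) w := by
  refine ((((hasDerivAt_id' w).mul_const L).exp.const_sub 1).const_mul a).congr_deriv ?_
  ring

theorem equal_marginal_condition_general (ps pt : ℝ)
    (hpt : pt ∈ Set.Ioo (0 : ℝ) 1) (m : ℕ) (Bt : ℝ)
    (wstar : Fin m → ℝ) (hfeas : (∑ i, wstar i) = Bt)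
    (hmax : ∀ w : Fin m → ℝ, (∑ i, w i) = Bt →
      synergyObj ps pt m w ≤ synergyObj ps pt m wstar) :
    ∃ μ : ℝ, 0 < μ ∧
      ∀ i : Fin m, ps ^ (i : ℕ) * Real.exp (wstar i * Real.log (1 - pt)) = μ := by
  set L := log (1 - pt)
  have hL : L ≠ 0 := (log_neg (by linarith [hpt.2]) (by linarith [hpt.1])).ne
  have hequal (i j : Fin m) :
      ps ^ (i : ℕ) * exp (wstar i * L) = ps ^ (j : ℕ) * exp (wstar j * L) := by
    have hmarginal := eq_of_isMaxOn_sum_of_hasDerivAt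
      (fun k : Fin m => hasDerivAt_mul_one_sub_exp_mul (ps ^ (k : ℕ)) L (wstar k))
      (isMaxOn_iff.mpr fun w hw => hmax w (hw.trans hfeas)) i j
    exact mul_left_cancel₀ (neg_ne_zero.mpr hL) hmarginal
  rcases Nat.eq_zero_or_pos m with rfl | hm
  · exact ⟨1, one_pos, fun i => i.elim0⟩
  · exact ⟨ps ^ 0 * exp (wstar ⟨0, hm⟩ * L), by positivity,
      fun i => hequal i ⟨0, hm⟩⟩

/-- Equal-marginal Lagrange stationarity: if `w*` maximizes the synergy objective over
the budget hyperplane `{w : ∑ᵢ wᵢ = B_t}`, then there is `μ > 0` with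
`p_s^i (1-p_t)^{w*_i} = μ` for every `i`. -/
theorem equal_marginal_condition (ps pt : ℝ) (hps : ps ∈ Set.Ioo (0 : ℝ) 1)
    (hpt : pt ∈ Set.Ioo (0 : ℝ) 1) (m : ℕ) (hm : 1 ≤ m) (Bt : ℝ)
    (wstar : Fin m → ℝ) (hfeas : (∑ i, wstar i) = Bt)
    (hmax : ∀ w : Fin m → ℝ, (∑ i, w i) = Bt →
      synergyObj ps pt m w ≤ synergyObj ps pt m wstar) :
    ∃ μ : ℝ, 0 < μ ∧
      ∀ i : Fin m, ps ^ (i : ℕ) * Real.exp (wstar i * Real.log (1 - pt)) = μ :=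
  equal_marginal_condition_general ps pt hpt m Bt wstar hfeas hmax
end

section
/- Let p_t ∈ (0,1), p_s ∈ (p_t, 1], let D ≥ 1 be an integer, and let w_1, …, w_D ≥ 1 be integer widths. Define q_d = 1 − (1−p_t)^{w_d} and q'_d = 1 − (1−p_s)(1−p_t)^{w_d−1} for each d. Then Y(q') > Y(q); that is, upgrading one token per depth from rate p_t to rate p_s (creating a spine) strictly increases the expected yield of the tree at unchanged node budget (core dominance step of Proposition 3). -/
/-- Expected yield of a speculation tree with per-depth advance probabilities
`q_1,…,q_D` (0-indexed here as `q 0, …, q (D-1)`):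
`Y(q) = 1 + ∑_{d=1}^{D} ∏_{j=1}^{d} q_j`, including the bonus token. -/
noncomputable def yieldY (D : ℕ) (q : ℕ → ℝ) : ℝ :=
  1 + ∑ d ∈ Finset.range D, ∏ j ∈ Finset.range (d + 1), q j

/-!
Each factor of the yield only grows under the upgrade: replacing one factor `1 - p_t` of the
miss probability `(1 - p_t)^w` by the smaller `1 - p_s` lowers it. Since `Y` is monotone in
nonnegative factors and the first depth appears alone as a summand, the strict gain there
makes the whole yield grow strictly.
-/

theorem yieldY_lt_yieldY {D : ℕ} {q q' : ℕ → ℝ} (hD : 0 < D) (hq : ∀ d < D, 0 ≤ q d)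
    (hqq' : ∀ d < D, q d ≤ q' d) (h0 : q 0 < q' 0) : yieldY D q < yieldY D q' := by
  unfold yieldY
  refine add_lt_add_right (Finset.sum_lt_sum (fun i hi => ?_) ⟨0, ?_, ?_⟩) 1
  · have hj : ∀ j ∈ Finset.range (i + 1), j < D := fun j hj => by
      simp only [Finset.mem_range] at hi hj; omega
    exact Finset.prod_le_prod (fun j hj' => hq j (hj j hj')) (fun j hj' => hqq' j (hj j hj'))
  · exact Finset.mem_range.2 hD
  · simpa only [zero_add, Finset.prod_range_one] using h0

theorem mul_pow_sub_one_lt_pow {R : Type*} [Semiring R] [PartialOrder R] [IsStrictOrderedRing R]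
    {x y : R} (hx : 0 < x) (hyx : y < x) (hy : y < 1) :
    ∀ n : ℕ, y * x ^ (n - 1) < x ^ n
  | 0 => by simpa using hy
  | n + 1 => by
    rw [Nat.add_sub_cancel, pow_succ']
    exact mul_lt_mul_of_pos_right hyx (pow_pos hx n)

theorem spine_upgrade_increases_yield_general (ps pt : ℝ) (hpt : pt ∈ Set.Ioo (0 : ℝ) 1)
    (hps : ps ∈ Set.Ioc pt 1) (D : ℕ) (hD : 1 ≤ D) (w : ℕ → ℕ) :
    yieldY D (fun d => 1 - (1 - pt) ^ (w d)) <
      yieldY D (fun d => 1 - (1 - ps) * (1 - pt) ^ (w d - 1)) := by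
  obtain ⟨hpt0, hpt1⟩ := hpt
  obtain ⟨hpts, -⟩ := hps
  have hmiss : ∀ n : ℕ, (1 - ps) * (1 - pt) ^ (n - 1) < (1 - pt) ^ n :=
    mul_pow_sub_one_lt_pow (by linarith) (by linarith) (by linarith)
  refine yieldY_lt_yieldY hD (fun d _ => ?_) (fun d _ => ?_) ?_
  · exact sub_nonneg.2 (pow_le_one₀ (by linarith) (by linarith))
  · exact sub_le_sub_left (hmiss (w d)).le 1
  · exact sub_lt_sub_left (hmiss (w 0)) 1

/-- Core dominance step of Proposition 3: upgrading one token per depth from rate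
`p_t` to rate `p_s > p_t` (creating a spine) strictly increases the expected yield
at unchanged node budget: with `q_d = 1 - (1-p_t)^{w_d}` and
`q'_d = 1 - (1-p_s)(1-p_t)^{w_d - 1}`, one has `Y(q') > Y(q)`. -/
theorem spine_upgrade_increases_yield (ps pt : ℝ) (hpt : pt ∈ Set.Ioo (0 : ℝ) 1)
    (hps : ps ∈ Set.Ioc pt 1) (D : ℕ) (hD : 1 ≤ D) (w : ℕ → ℕ)
    (hw : ∀ d < D, 1 ≤ w d) :
    yieldY D (fun d => 1 - (1 - pt) ^ (w d)) <
      yieldY D (fun d => 1 - (1 - ps) * (1 - pt) ^ (w d - 1)) :=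
  spine_upgrade_increases_yield_general ps pt hpt hps D hD w
end
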